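/- arXiv:1912.04445 — 2 statements merged into one kernel-verified Lean document; each statement's English description precedes it below -/
import Mathlib

section
/- For all natural numbers n and m, the cylindrical board (5+2n)′×(8+2m) admits a fault-free domino tiling. -/
/-- Adjacency on the cylindrical board `a′ × b` (height `a`, circumference `b`):
cells `(i,j)` and `(i+1,j)` (vertical neighbors) or `(i,j)` and `(i,j+1)` with
addition in `ZMod b` (horizontal neighbors, wrapping around). -/
def cylAdj (a b : ℕ) (c d : Fin a × ZMod b) : Prop :=
  (c.2 = d.2 ∧ ((c.1 : ℕ) + 1 = (d.1 : ℕ) ∨ (d.1 : ℕ) + 1 = (c.1 : ℕ))) ∨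
  (c.1 = d.1 ∧ (d.2 = c.2 + 1 ∨ c.2 = d.2 + 1))

/-- A tiling of the cylindrical board: a set of dominoes (unordered pairs of
adjacent cells) such that every cell belongs to exactly one domino. -/
def cylIsTiling (a b : ℕ) (T : Set (Sym2 (Fin a × ZMod b))) : Prop :=
  (∀ p ∈ T, ∃ c d, cylAdj a b c d ∧ p = s(c, d)) ∧
  (∀ x : Fin a × ZMod b, ∃! p, p ∈ T ∧ x ∈ p)

/-- A tiling of the cylindrical board is fault-free if every horizontal fault-line
(between rows `i` and `i+1`, for `i + 1 < a`) and every vertical fault-line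
(between columns `j` and `j+1`, for `j : ZMod b`) is crossed by some domino. -/
def cylFaultFree (a b : ℕ) (T : Set (Sym2 (Fin a × ZMod b))) : Prop :=
  (∀ i : ℕ, i + 1 < a → ∃ c d : Fin a × ZMod b,
      s(c, d) ∈ T ∧ c.2 = d.2 ∧ (c.1 : ℕ) = i ∧ (d.1 : ℕ) = i + 1) ∧
  (∀ j : ZMod b, ∃ i : Fin a, s((i, j), (i, j + 1)) ∈ T)

/-- The cylindrical board `a′ × b` admits a fault-free domino tiling. -/
def cylFaultFreeTileable (a b : ℕ) : Prop :=
  ∃ T : Set (Sym2 (Fin a × ZMod b)), cylIsTiling a b T ∧ cylFaultFree a b T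

/-! Every column of the tiling has three cells, in cyclically consecutive rows, covered by
horizontal dominoes; its other `a - 3` cells form an interval of even length, tiled by vertical
dominoes. Going right, columns `0, …, 5` send the rows `{a-2, a-1}, {a-3}, {a-2, a-1}, {0},
{1, a-1}, {0}` across, and the later columns alternately `{1, 2}` and `{0}`, which closes up around
the cylinder because `b` is even; so every vertical fault-line is crossed. The vertical intervals
of columns `1, 0, 4, 6` start at rows `0, 1, 2, 3`, so their dominoes cross every horizontal
fault-line. -/

lemma ZMod.val_add_one_eq_ite {b : ℕ} (hb : 1 < b) (j : ZMod b) :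
    (j + 1).val = if j.val + 1 = b then 0 else j.val + 1 := by
  have : Fact (1 < b) := ⟨hb⟩
  have hj := j.val_lt
  rw [ZMod.val_add, ZMod.val_one]
  split_ifs with h
  · rw [h, Nat.mod_self]
  · exact Nat.mod_eq_of_lt (by omega)

lemma cylIsTiling_range_of_involutive {a b : ℕ} {f : Fin a × ZMod b → Fin a × ZMod b}
    (hf : Function.Involutive f) (hadj : ∀ c, cylAdj a b c (f c)) :
    cylIsTiling a b (Set.range fun c => s(c, f c)) := by
  refine ⟨?_, fun c => ⟨s(c, f c), ⟨⟨c, rfl⟩, Sym2.mem_mk_left _ _⟩, ?_⟩⟩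
  · rintro _ ⟨c, rfl⟩
    exact ⟨c, f c, hadj c, rfl⟩
  · rintro _ ⟨⟨d, rfl⟩, hc⟩
    rcases Sym2.mem_iff.mp hc with rfl | rfl
    · rfl
    · rw [hf d]
      exact Sym2.eq_swap

/-- `right j i`: the cell `(i, j)` is covered by a horizontal domino reaching into column `j + 1`.
The cells of column `j` covered by vertical dominoes are the rows in `[lo j, hi j)`. -/
structure CylColumnPattern (a b : ℕ) where
  right : ZMod b → Fin a → Prop
  lo : ZMod b → ℕ
  hi : ZMod b → ℕ
  right_disjoint : ∀ j i, right j i → ¬ right (j + 1) i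
  not_right_iff : ∀ j i, ¬ right j i ∧ ¬ right (j - 1) i ↔ lo j ≤ i ∧ (i : ℕ) < hi j
  hi_le : ∀ j, hi j ≤ a
  lo_mod_two : ∀ j, lo j % 2 = hi j % 2

namespace CylColumnPattern

variable {a b : ℕ} [NeZero a]

def rowPartner (lo : ℕ) (i : Fin a) : Fin a :=
  if (i : ℕ) % 2 = lo % 2 then i + 1 else i - 1

lemma val_rowPartner {lo hi : ℕ} (hle : hi ≤ a) (hmod : lo % 2 = hi % 2) {i : Fin a}
    (hlo : lo ≤ i) (hhi : (i : ℕ) < hi) :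
    (rowPartner lo i : ℕ) = if (i : ℕ) % 2 = lo % 2 then (i : ℕ) + 1 else (i : ℕ) - 1 := by
  unfold rowPartner
  split_ifs with h
  · exact Fin.val_add_one_of_lt' (i := i) (by omega)
  · exact Fin.val_sub_one_of_ne_zero (i := i) (by rw [Ne, Fin.ext_iff, Fin.val_zero]; omega)

lemma rowPartner_spec {lo hi : ℕ} (hle : hi ≤ a) (hmod : lo % 2 = hi % 2) {i : Fin a}
    (hlo : lo ≤ i) (hhi : (i : ℕ) < hi) :
    lo ≤ rowPartner lo i ∧ (rowPartner lo i : ℕ) < hi ∧ rowPartner lo (rowPartner lo i) = i ∧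
      ((i : ℕ) + 1 = rowPartner lo i ∨ (rowPartner lo i : ℕ) + 1 = i) := by
  have h1 := val_rowPartner hle hmod hlo hhi
  have hlo' : lo ≤ rowPartner lo i := by split_ifs at h1 <;> omega
  have hhi' : (rowPartner lo i : ℕ) < hi := by split_ifs at h1 <;> omega
  have h2 := val_rowPartner hle hmod hlo' hhi'
  refine ⟨hlo', hhi', Fin.ext ?_, ?_⟩ <;> split_ifs at h1 h2 <;> omega

variable (P : CylColumnPattern a b)

open Classical in
noncomputable def partner (c : Fin a × ZMod b) : Fin a × ZMod b :=
  if P.right c.2 c.1 then (c.1, c.2 + 1)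
  else if P.right (c.2 - 1) c.1 then (c.1, c.2 - 1)
  else (rowPartner (P.lo c.2) c.1, c.2)

variable {P}

lemma partner_of_right {c : Fin a × ZMod b} (h : P.right c.2 c.1) :
    P.partner c = (c.1, c.2 + 1) := by
  rw [partner, if_pos h]

lemma partner_of_left {c : Fin a × ZMod b} (h : P.right (c.2 - 1) c.1) :
    P.partner c = (c.1, c.2 - 1) := by
  have h' : ¬ P.right c.2 c.1 := by simpa only [sub_add_cancel] using P.right_disjoint _ _ h
  rw [partner, if_neg h', if_pos h]

lemma partner_of_mem {c : Fin a × ZMod b} (hlo : P.lo c.2 ≤ c.1) (hhi : (c.1 : ℕ) < P.hi c.2) :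
    P.partner c = (rowPartner (P.lo c.2) c.1, c.2) := by
  obtain ⟨h1, h2⟩ := (P.not_right_iff _ _).2 ⟨hlo, hhi⟩
  rw [partner, if_neg h1, if_neg h2]

lemma partner_partner (c : Fin a × ZMod b) : P.partner (P.partner c) = c := by
  by_cases hr : P.right c.2 c.1
  · rw [partner_of_right hr, partner_of_left (by rwa [add_sub_cancel_right]), add_sub_cancel_right]
  by_cases hl : P.right (c.2 - 1) c.1
  · rw [partner_of_left hl, partner_of_right hl, sub_add_cancel]
  obtain ⟨hlo, hhi⟩ := (P.not_right_iff _ _).1 ⟨hr, hl⟩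
  obtain ⟨hlo', hhi', hinv, -⟩ := rowPartner_spec (P.hi_le _) (P.lo_mod_two _) hlo hhi
  rw [partner_of_mem hlo hhi, partner_of_mem hlo' hhi', hinv]

lemma cylAdj_partner (c : Fin a × ZMod b) : cylAdj a b c (P.partner c) := by
  by_cases hr : P.right c.2 c.1
  · rw [partner_of_right hr]
    exact Or.inr ⟨rfl, Or.inl rfl⟩
  by_cases hl : P.right (c.2 - 1) c.1
  · rw [partner_of_left hl]
    exact Or.inr ⟨rfl, Or.inr (sub_add_cancel _ _).symm⟩
  obtain ⟨hlo, hhi⟩ := (P.not_right_iff _ _).1 ⟨hr, hl⟩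
  obtain ⟨-, -, -, hstep⟩ := rowPartner_spec (P.hi_le _) (P.lo_mod_two _) hlo hhi
  rw [partner_of_mem hlo hhi]
  exact Or.inl ⟨rfl, hstep⟩

variable (P)

noncomputable def tiling : Set (Sym2 (Fin a × ZMod b)) :=
  Set.range fun c => s(c, P.partner c)

lemma isTiling : cylIsTiling a b P.tiling :=
  cylIsTiling_range_of_involutive partner_partner cylAdj_partner

lemma faultFree (hright : ∀ j, ∃ i, P.right j i)
    (hvert : ∀ i : ℕ, i + 1 < a → ∃ j, P.lo j ≤ i ∧ i + 2 ≤ P.hi j ∧ i % 2 = P.lo j % 2) :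
    cylFaultFree a b P.tiling := by
  refine ⟨fun i hi => ?_, fun j => ?_⟩
  · obtain ⟨j, hlo, hhi, hpar⟩ := hvert i hi
    let c : Fin a × ZMod b := (⟨i, by omega⟩, j)
    have hc_hi : (c.1 : ℕ) < P.hi j := by change i < _; omega
    have hc : P.partner c = (rowPartner (P.lo j) c.1, j) := partner_of_mem hlo hc_hi
    refine ⟨c, P.partner c, ⟨c, rfl⟩, by rw [hc], rfl, ?_⟩
    rw [hc, val_rowPartner (P.hi_le j) (P.lo_mod_two j) hlo hc_hi, if_pos hpar]
  · obtain ⟨i, hi⟩ := hright j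
    refine ⟨i, (i, j), ?_⟩
    change s((i, j), P.partner (i, j)) = _
    rw [partner_of_right hi]

def stdRight (a v i : ℕ) : Prop :=
  if v = 0 ∨ v = 2 then a - 2 ≤ i
  else if v = 1 then i + 3 = a
  else if v = 4 then i = 1 ∨ i + 1 = a
  else if v % 2 = 1 then i = 0
  else i = 1 ∨ i = 2

def stdStart (v : ℕ) : ℕ :=
  if v = 1 ∨ v = 2 then 0 else if v = 0 ∨ v = 3 then 1 else if v ≤ 5 then 2 else 3

lemma exists_stdRight {a : ℕ} (ha : 3 ≤ a) (v : ℕ) : ∃ i < a, stdRight a v i := by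
  unfold stdRight
  split_ifs
  · exact ⟨a - 1, by omega, by omega⟩
  · exact ⟨a - 3, by omega, by omega⟩
  · exact ⟨1, by omega, by omega⟩
  · exact ⟨0, by omega, rfl⟩
  · exact ⟨1, by omega, by omega⟩

lemma exists_stdStart {a i : ℕ} (ha : 5 ≤ a) (ha' : a % 2 = 1) (hi : i + 1 < a) :
    ∃ v < 7, stdStart v ≤ i ∧ i + 2 ≤ stdStart v + a - 3 ∧ i % 2 = stdStart v % 2 := by
  rcases (by omega : i = 0 ∨ i = 1 ∨ (2 ≤ i ∧ i % 2 = 0) ∨ (3 ≤ i ∧ i % 2 = 1)) with h | h | h | h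
  · exact ⟨1, by norm_num, by simp +decide only [stdStart, ↓reduceIte]; omega⟩
  · exact ⟨0, by norm_num, by simp +decide only [stdStart, ↓reduceIte]; omega⟩
  · exact ⟨4, by norm_num, by simp +decide only [stdStart, ↓reduceIte]; omega⟩
  · exact ⟨6, by norm_num, by simp +decide only [stdStart, ↓reduceIte]; omega⟩

def std {a b : ℕ} (ha : 3 ≤ a) (ha' : a % 2 = 1) (hb : 4 ≤ b) (hb' : b % 2 = 0) :
    CylColumnPattern a b where
  right j i := stdRight a j.val i
  lo j := stdStart j.val
  hi j := stdStart j.val + a - 3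
  right_disjoint j i := by
    have hj : j.val < b := by have : NeZero b := ⟨by omega⟩; exact j.val_lt
    have hw := ZMod.val_add_one_eq_ite (by omega) j
    have hi := i.isLt
    generalize (j + 1).val = w at *
    generalize j.val = v at *
    unfold stdRight
    split_ifs at * <;> omega
  not_right_iff j i := by
    obtain ⟨k, rfl⟩ : ∃ k, j = k + 1 := ⟨j - 1, (sub_add_cancel j 1).symm⟩
    rw [add_sub_cancel_right]
    have hk : k.val < b := by have : NeZero b := ⟨by omega⟩; exact k.val_lt
    have hw := ZMod.val_add_one_eq_ite (by omega) k
    have hi := i.isLt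
    generalize (k + 1).val = w at *
    generalize k.val = v at *
    unfold stdRight stdStart
    split_ifs at * <;> omega
  hi_le j := by unfold stdStart; split_ifs <;> omega
  lo_mod_two j := by unfold stdStart; split_ifs <;> omega

end CylColumnPattern

open CylColumnPattern in
theorem cylFaultFreeTileable_of_odd_of_even {a b : ℕ} (ha : 5 ≤ a) (ha' : Odd a) (hb : 8 ≤ b)
    (hb' : Even b) : cylFaultFreeTileable a b := by
  have : NeZero a := ⟨by omega⟩
  let P := std (by omega) (Nat.odd_iff.1 ha') (by omega) (Nat.even_iff.1 hb')
  refine ⟨P.tiling, P.isTiling, P.faultFree (fun j => ?_) (fun i hi => ?_)⟩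
  · obtain ⟨i, hi, hright⟩ := exists_stdRight (by omega : 3 ≤ a) j.val
    exact ⟨⟨i, hi⟩, hright⟩
  · obtain ⟨v, hv, hstart⟩ := exists_stdStart ha (Nat.odd_iff.1 ha') hi
    have hval : (v : ZMod b).val = v := ZMod.val_natCast_of_lt (by omega)
    exact ⟨v, by simpa only [P, std, hval] using hstart⟩

/-- For all natural numbers `n` and `m`, the cylindrical board
`(5 + 2 * n)′ × (8 + 2 * m)` admits a fault-free domino tiling. -/
theorem cyl_faultFree_5'8 :
    ∀ n m : ℕ, cylFaultFreeTileable (5 + 2 * n) (8 + 2 * m) := fun n m =>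
  cylFaultFreeTileable_of_odd_of_even (by omega) (Nat.odd_iff.2 (by omega)) (by omega)
    (Nat.even_iff.2 (by omega))
end

section
/- Neither the cylindrical board 6′×5 nor the cylindrical board 5′×6 admits a fault-free domino tiling. -/
/-! Sending each cell to the other cell of its domino is a fixed-point-free involution `f`, and
for any set `S` of cells, `#S ≡ #{x ∈ S | f x ∉ S} (mod 2)`. Let `dᵢ = hLineCrossings f i` and
`wⱼ = vLineCrossings f j` be the numbers of dominoes crossing the `i`-th horizontal and the `j`-th
vertical fault-line. Taking for `S` the bottom `i + 1` rows gives `dᵢ ≡ (i + 1) b`, taking the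
column `j + 1` gives `wⱼ + wⱼ₊₁ ≡ a`. Each domino crosses exactly one fault-line, so
`Σ dᵢ + Σ wⱼ = ab / 2`, and fault-freeness makes every `dᵢ` and `wⱼ` positive. For `6′ × 5` and
`5′ × 6` these constraints are contradictory. -/

open Finset Function

namespace Function.Involutive

variable {α : Type*} {f : α → α}

lemma card_filter_swap [Fintype α] (hf : Involutive f) (R : α → α → Prop) [DecidableRel R] :
    #{x | R x (f x)} = #{x | R (f x) x} :=
  card_equiv hf.toPerm fun x => by simp [hf x]

lemma card_eq_two_mul_card_filter (hf : Involutive f) {s : Finset α} (hs : ∀ x ∈ s, f x ∈ s)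
    (P : α → Prop) [DecidablePred P] (hP : ∀ x, P (f x) ↔ ¬ P x) :
    #s = 2 * #{x ∈ s | P x} := by
  have hswap : #{x ∈ s | ¬ P x} = #{x ∈ s | P x} := by
    refine card_equiv hf.toPerm fun x => ?_
    have : f x ∈ s ↔ x ∈ s := ⟨fun h => hf x ▸ hs _ h, hs x⟩
    simp [this, hP]
  rw [← card_filter_add_card_filter_not P, hswap, two_mul]

lemma even_card [Fintype α] (hf : Involutive f) (hne : ∀ x, f x ≠ x) {s : Finset α}
    (hs : ∀ x ∈ s, f x ∈ s) : Even #s := by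
  let e := Fintype.equivFin α
  refine ⟨#{x ∈ s | e x < e (f x)}, ?_⟩
  rw [hf.card_eq_two_mul_card_filter hs (fun x => e x < e (f x)), two_mul]
  intro x
  rw [hf x, not_lt, le_iff_lt_or_eq, or_iff_left]
  exact fun h => hne x (e.injective h)

lemma card_mod_two [Fintype α] [DecidableEq α] (hf : Involutive f) (hne : ∀ x, f x ≠ x)
    (s : Finset α) : #s % 2 = #{x ∈ s | f x ∉ s} % 2 := by
  have hstable : ∀ x ∈ {x ∈ s | f x ∈ s}, f x ∈ {x ∈ s | f x ∈ s} := by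
    intro x hx
    simp only [mem_filter] at hx ⊢
    exact ⟨hx.2, (hf x).symm ▸ hx.1⟩
  obtain ⟨m, hm⟩ := hf.even_card hne hstable
  rw [← card_filter_add_card_filter_not (fun x => f x ∈ s), hm]
  omega

end Function.Involutive

namespace cylAdj

variable {a b : ℕ} {x y : Fin a × ZMod b}

lemma symm (h : cylAdj a b x y) : cylAdj a b y x := by
  unfold cylAdj at *
  tauto

lemma row_le (h : cylAdj a b x y) : (y.1 : ℕ) ≤ x.1 + 1 := by
  rcases h with ⟨-, h | h⟩ | ⟨h, -⟩ <;> [omega; omega; simp [h]]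

lemma ne (h1 : (1 : ZMod b) ≠ 0) (h : cylAdj a b x y) : x ≠ y := by
  rintro rfl
  rcases h with ⟨-, h | h⟩ | ⟨-, h | h⟩ <;> first | omega | exact h1 (by simpa using h)

lemma snd_ne_iff (h1 : (1 : ZMod b) ≠ 0) (h : cylAdj a b x y) :
    y.2 ≠ x.2 ↔ y = (x.1, x.2 + 1) ∨ x = (y.1, y.2 + 1) := by
  rcases h with ⟨h, -⟩ | ⟨h, h' | h'⟩ <;> simp_all [Prod.ext_iff]

lemma upper_or_right_iff_not (h2 : (2 : ZMod b) ≠ 0) (h : cylAdj a b x y) :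
    ((x.1 : ℕ) = y.1 + 1 ∨ x = (y.1, y.2 + 1)) ↔
      ¬ ((y.1 : ℕ) = x.1 + 1 ∨ y = (x.1, x.2 + 1)) := by
  have h2' : ∀ z : ZMod b, z ≠ z + 1 + 1 := fun z hz => h2 (by linear_combination -hz)
  rcases h with ⟨-, h | h⟩ | ⟨h, h' | h'⟩ <;> simp_all [Prod.ext_iff, Fin.ext_iff] <;> omega

end cylAdj

lemma cylIsTiling.exists_partner {a b : ℕ} {T : Set (Sym2 (Fin a × ZMod b))}
    (hT : cylIsTiling a b T) :
    ∃ f : Fin a × ZMod b → Fin a × ZMod b,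
      Involutive f ∧ (∀ x, cylAdj a b x (f x)) ∧ ∀ x y, s(x, y) ∈ T → f x = y := by
  have hcell : ∀ x, ∃ y, cylAdj a b x y ∧ s(x, y) ∈ T := by
    intro x
    obtain ⟨p, ⟨hpT, hxp⟩, -⟩ := hT.2 x
    obtain ⟨c, d, hcd, rfl⟩ := hT.1 p hpT
    rcases Sym2.mem_iff.mp hxp with rfl | rfl
    · exact ⟨d, hcd, hpT⟩
    · exact ⟨c, hcd.symm, Sym2.eq_swap ▸ hpT⟩
  choose f hadj hmem using hcell
  have hpartner : ∀ x y, s(x, y) ∈ T → f x = y := by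
    intro x y hxy
    obtain ⟨p, -, huniq⟩ := hT.2 x
    have := (huniq _ ⟨hmem x, Sym2.mem_mk_left x (f x)⟩).trans
      (huniq _ ⟨hxy, Sym2.mem_mk_left x y⟩).symm
    exact Sym2.congr_right.mp this
  exact ⟨f, fun x => hpartner _ _ (Sym2.eq_swap ▸ hmem x), hadj, hpartner⟩

section Crossings

variable {a b : ℕ} [NeZero b]

def hLineCrossings (f : Fin a × ZMod b → Fin a × ZMod b) (i : ℕ) : ℕ :=
  #{x | (x.1 : ℕ) = i ∧ ((f x).1 : ℕ) = i + 1}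

def vLineCrossings (f : Fin a × ZMod b → Fin a × ZMod b) (j : ZMod b) : ℕ :=
  #{x | x.2 = j ∧ f x = (x.1, j + 1)}

lemma sum_hLineCrossings (f : Fin a × ZMod b → Fin a × ZMod b) :
    ∑ i ∈ range (a - 1), hLineCrossings f i = #{x | ((f x).1 : ℕ) = x.1 + 1} := by
  rw [card_eq_sum_card_fiberwise (f := fun x => (x.1 : ℕ)) (t := range (a - 1))]
  · refine sum_congr rfl fun i _ => ?_
    rw [filter_filter, hLineCrossings]
    congr 1
    ext x
    simp only [mem_filter, mem_univ, true_and]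
    omega
  · intro x hx
    have := (f x).1.isLt
    simp only [coe_filter, mem_univ, true_and, Set.mem_ofPred_eq] at hx
    simp only [coe_range, Set.mem_Iio]
    omega

lemma sum_vLineCrossings (f : Fin a × ZMod b → Fin a × ZMod b) :
    ∑ j, vLineCrossings f j = #{x | f x = (x.1, x.2 + 1)} := by
  rw [card_eq_sum_card_fiberwise (f := fun x => x.2) (t := univ) (fun x _ => mem_univ _)]
  refine sum_congr rfl fun j _ => ?_
  rw [filter_filter, vLineCrossings]
  congr 1
  ext x
  simp only [mem_filter, mem_univ, true_and]
  constructor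
  · rintro ⟨rfl, h⟩
    exact ⟨h, rfl⟩
  · rintro ⟨h, rfl⟩
    exact ⟨rfl, h⟩

lemma vLineCrossings_eq_card_filter_left {f : Fin a × ZMod b → Fin a × ZMod b}
    (hf : Involutive f) (j : ZMod b) :
    vLineCrossings f j = #{x | x.2 = j + 1 ∧ x = ((f x).1, (f x).2 + 1)} := by
  refine (hf.card_filter_swap (fun x y => x.2 = j ∧ y = (x.1, j + 1))).trans ?_
  congr 1
  ext x
  simp only [mem_filter, mem_univ, true_and, Prod.ext_iff]
  constructor
  · rintro ⟨hj, h, h'⟩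
    exact ⟨h', h, by rw [hj, h']⟩
  · rintro ⟨hj, h, h'⟩
    exact ⟨add_right_cancel (h'.symm.trans hj), h, hj⟩

variable {f : Fin a × ZMod b → Fin a × ZMod b} (hf : Involutive f)
  (hadj : ∀ x, cylAdj a b x (f x))
include hf hadj

lemma hLineCrossings_mod_two (h1 : (1 : ZMod b) ≠ 0) {i : ℕ} (hi : i < a) :
    hLineCrossings f i % 2 = (i + 1) * b % 2 := by
  have hbelow : #{x : Fin a × ZMod b | (x.1 : ℕ) ≤ i} = (i + 1) * b := by
    rw [show ({x | (x.1 : ℕ) ≤ i} : Finset (Fin a × ZMod b)) = Iic ⟨i, hi⟩ ×ˢ univ by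
      ext; simp [Fin.le_def]]
    simp [card_product, Fin.card_Iic, ZMod.card]
  rw [← hbelow, hf.card_mod_two (fun x => ((hadj x).ne h1).symm), hLineCrossings, filter_filter]
  congr 2
  ext x
  have := (hadj x).row_le
  simp only [mem_filter, mem_univ, true_and]
  omega

lemma vLineCrossings_add_mod_two (h2 : (2 : ZMod b) ≠ 0) (j : ZMod b) :
    (vLineCrossings f j + vLineCrossings f (j + 1)) % 2 = a % 2 := by
  have h1 : (1 : ZMod b) ≠ 0 := fun h => h2 (by rw [← one_add_one_eq_two, h, add_zero])
  have hcolumn : #{x : Fin a × ZMod b | x.2 = j + 1} = a := by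
    rw [show ({x | x.2 = j + 1} : Finset (Fin a × ZMod b)) = univ ×ˢ {j + 1} by
      ext ⟨i, k⟩; simp [eq_comm]]
    simp
  have hright : vLineCrossings f (j + 1) = #{x | x.2 = j + 1 ∧ f x = (x.1, x.2 + 1)} := by
    unfold vLineCrossings
    congr 1
    ext x
    simp only [mem_filter, mem_univ, true_and]
    constructor <;> rintro ⟨hj, h⟩ <;> exact ⟨hj, by rwa [hj] at *⟩
  have hdisjoint : Disjoint (α := Finset (Fin a × ZMod b))
      {x | x.2 = j + 1 ∧ f x = (x.1, x.2 + 1)}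
      {x | x.2 = j + 1 ∧ x = ((f x).1, (f x).2 + 1)} := by
    refine disjoint_filter.2 fun x _ hr hl => h2 ?_
    have := congrArg Prod.snd (hl.2.trans (by rw [hr.2]))
    simp only at this
    linear_combination -this
  conv_rhs => rw [← hcolumn, hf.card_mod_two (fun x => ((hadj x).ne h1).symm)]
  rw [vLineCrossings_eq_card_filter_left hf, hright, add_comm,
    ← card_union_of_disjoint hdisjoint, ← filter_or, filter_filter]
  congr 2
  ext x
  simp only [mem_filter, mem_univ, true_and, ← and_or_left]
  exact and_congr_right fun hx => hx ▸ ((hadj x).snd_ne_iff h1).symm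

lemma mul_eq_two_mul_sum_crossings (h2 : (2 : ZMod b) ≠ 0) :
    a * b = 2 * (∑ i ∈ range (a - 1), hLineCrossings f i + ∑ j, vLineCrossings f j) := by
  -- each domino has exactly one cell whose partner lies above it or to its right
  have hpair := hf.card_eq_two_mul_card_filter (s := univ) (fun x _ => mem_univ (f x))
    (fun x => ((f x).1 : ℕ) = x.1 + 1 ∨ f x = (x.1, x.2 + 1))
    (fun x => by simpa only [hf x] using (hadj x).upper_or_right_iff_not h2)
  have hdisjoint : Disjoint (α := Finset (Fin a × ZMod b))
      {x | ((f x).1 : ℕ) = x.1 + 1} {x | f x = (x.1, x.2 + 1)} :=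
    disjoint_filter.2 fun x _ hv hh => by simp [hh] at hv
  rw [sum_hLineCrossings, sum_vLineCrossings, ← card_union_of_disjoint hdisjoint, ← filter_or,
    ← hpair, card_univ, Fintype.card_prod, Fintype.card_fin, ZMod.card]

end Crossings

section FaultFree

variable {a b : ℕ} [NeZero b] {T : Set (Sym2 (Fin a × ZMod b))}
  {f : Fin a × ZMod b → Fin a × ZMod b} (hpartner : ∀ x y, s(x, y) ∈ T → f x = y)
include hpartner

lemma cylFaultFree.hLineCrossings_pos (hT : cylFaultFree a b T) {i : ℕ} (hi : i + 1 < a) :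
    0 < hLineCrossings f i := by
  obtain ⟨c, d, hcd, -, hc, hd⟩ := hT.1 i hi
  exact card_pos.2 ⟨c, by simp [hc, hd, hpartner c d hcd]⟩

lemma cylFaultFree.vLineCrossings_pos (hT : cylFaultFree a b T) (j : ZMod b) :
    0 < vLineCrossings f j := by
  obtain ⟨i, hi⟩ := hT.2 j
  exact card_pos.2 ⟨(i, j), by simp [hpartner _ _ hi]⟩

end FaultFree

theorem cylFaultFreeTileable.exists_crossing_numbers {a b : ℕ} [NeZero b]
    (h : cylFaultFreeTileable a b) (h2 : (2 : ZMod b) ≠ 0) :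
    ∃ (d : ℕ → ℕ) (w : ZMod b → ℕ),
      (∀ i, i + 1 < a → 0 < d i ∧ d i % 2 = (i + 1) * b % 2) ∧
      (∀ j, 0 < w j ∧ (w j + w (j + 1)) % 2 = a % 2) ∧
      a * b = 2 * (∑ i ∈ range (a - 1), d i + ∑ j, w j) := by
  obtain ⟨T, hT, hfree⟩ := h
  obtain ⟨f, hf, hadj, hpartner⟩ := hT.exists_partner
  have h1 : (1 : ZMod b) ≠ 0 := fun h => h2 (by rw [← one_add_one_eq_two, h, add_zero])
  exact ⟨hLineCrossings f, vLineCrossings f,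
    fun i hi => ⟨hfree.hLineCrossings_pos hpartner hi,
      hLineCrossings_mod_two hf hadj h1 (by omega)⟩,
    fun j => ⟨hfree.vLineCrossings_pos hpartner j, vLineCrossings_add_mod_two hf hadj h2 j⟩,
    mul_eq_two_mul_sum_crossings hf hadj h2⟩

/- `dᵢ ≡ i + 1 (mod 2)`, so `Σ d ≥ 1 + 2 + 1 + 2 + 1 = 7` is odd; all `wⱼ` have the same
parity, which must be even as `Σ d + Σ w = 15`, so `Σ w ≥ 10`. -/
lemma not_cylFaultFreeTileable_six_five : ¬ cylFaultFreeTileable 6 5 := by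
  intro h
  obtain ⟨d, w, hd, hw, htotal⟩ := h.exists_crossing_numbers (by decide)
  rw [show ∑ j, w j = w 0 + w 1 + w 2 + w 3 + w 4 from Fin.sum_univ_five w] at htotal
  simp only [Nat.reduceSub, sum_range_succ, sum_range_zero] at htotal
  have := hd 0 (by norm_num); have := hd 1 (by norm_num); have := hd 2 (by norm_num)
  have := hd 3 (by norm_num); have := hd 4 (by norm_num)
  have hw0 := hw 0; have hw1 := hw 1; have hw2 := hw 2; have hw3 := hw 3; have hw4 := hw 4
  reduce_mod_char at hw0 hw1 hw2 hw3 hw4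
  omega

/- Every `dᵢ` is even, so `Σ d ≥ 8`; the `wⱼ` alternate in parity around the six columns, so
`Σ w ≥ 3 · 1 + 3 · 2 = 9`; but `Σ d + Σ w = 15`. -/
lemma not_cylFaultFreeTileable_five_six : ¬ cylFaultFreeTileable 5 6 := by
  intro h
  obtain ⟨d, w, hd, hw, htotal⟩ := h.exists_crossing_numbers (by decide)
  rw [show ∑ j, w j = w 0 + w 1 + w 2 + w 3 + w 4 + w 5 from Fin.sum_univ_six w] at htotal
  simp only [Nat.reduceSub, sum_range_succ, sum_range_zero] at htotal
  have := hd 0 (by norm_num); have := hd 1 (by norm_num); have := hd 2 (by norm_num)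
  have := hd 3 (by norm_num)
  have hw0 := hw 0; have hw1 := hw 1; have hw2 := hw 2; have hw3 := hw 3; have hw4 := hw 4
  have hw5 := hw 5
  reduce_mod_char at hw0 hw1 hw2 hw3 hw4 hw5
  omega

/-- Neither the cylindrical board `6′ × 5` nor the cylindrical board `5′ × 6`
admits a fault-free domino tiling. -/
theorem cyl_not_faultFree_6'5_and_5'6 :
    ¬ cylFaultFreeTileable 6 5 ∧ ¬ cylFaultFreeTileable 5 6 :=
  ⟨not_cylFaultFreeTileable_six_five, not_cylFaultFreeTileable_five_six⟩
end
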